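/- Let Γ : ℝ≥0^n → ℝ≥0^n be a continuous MAX-preserving map built from continuous non-decreasing gains γ_{i,j} with γ_{i,j}(0)=0, satisfying the cyclic small-gain conditions. Then for every x ∈ ℝ≥0^n, the iterates satisfy Γ^(k)(x) ≤ Q(x) := MAX{x, Γ(x), …, Γ^(n-1)(x)} for all k ≥ 1, and Γ^(k)(x) → 0 as k → ∞. -/

import Mathlib

open scoped NNReal

/-- The composition `γ_{i₁,i₂} ∘ γ_{i₂,i₃} ∘ ⋯ ∘ γ_{i_r,i₁}` along the cycle
given by the list `l = [i₁, …, i_r]`. -/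
def cycleGain {n : ℕ} (γ : Fin n → Fin n → ℝ≥0 → ℝ≥0) (l : List (Fin n)) :
    ℝ≥0 → ℝ≥0 :=
  ((l.zip (l.rotate 1)).map fun p => γ p.1 p.2).foldr (· ∘ ·) id

/-- `γ` satisfies the cyclic small-gain conditions: the gain along every cycle of
pairwise distinct indices (including the trivial cycles `γ_{i,i}`) is strictly
below the identity on `(0,∞)`. -/
def CyclicSmallGain {n : ℕ} (γ : Fin n → Fin n → ℝ≥0 → ℝ≥0) : Prop :=
  ∀ l : List (Fin n), l.Nodup → l ≠ [] → ∀ s : ℝ≥0, 0 < s → cycleGain γ l s < s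


/-!
A walk `i₀ i₁ … i_k` transports `x` to `γ_{i₀ i₁} (⋯ (γ_{i_{k-1} i_k} (x i_k)))`, and
`(Γ^[k] x) i` is the largest such value over the walks of length `k` from `i`. A closed walk with
a repeated vertex splits into two shorter closed walks, so the cyclic small-gain condition on
simple cycles extends to all closed walks. Cutting a closed subwalk out of a walk therefore never
decreases its value, and every value is dominated by that of a walk without repeated vertices,
of length `< n`: this is `Γ^[k] x ≤ Q x`.

For the limit, `Γ (Q x) = MAX {Γ x, …, Γ^[n] x} ≤ Q x`, so `Γ^[k] (Q x)` decreases to a fixed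
point `L` of the continuous map `Γ`. Following from any index a maximising edge of `L ≤ Γ L`
eventually runs around a cycle, along which `L` would strictly decrease unless it vanishes; so
`L = 0`, and `0 ≤ Γ^[k] x ≤ Γ^[k] (Q x)` squeezes the iterates to `0`.
-/

open Filter

theorem List.exists_eq_append_cons_append_cons_of_not_nodup {α : Type*} {l : List α}
    (hl : ¬l.Nodup) : ∃ a u v t, l = u ++ a :: v ++ a :: t := by
  obtain ⟨a, ha⟩ := List.exists_duplicate_iff_not_nodup.mpr hl
  clear hl
  induction ha with
  | cons_mem hmem =>
    obtain ⟨v, t, rfl⟩ := List.append_of_mem hmem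
    exact ⟨a, [], v, t, rfl⟩
  | @cons_duplicate y _ _ ih =>
    obtain ⟨a, u, v, t, rfl⟩ := ih
    exact ⟨a, y :: u, v, t, rfl⟩

variable {n : ℕ}

def gainMap (γ : Fin n → Fin n → ℝ≥0 → ℝ≥0) (x : Fin n → ℝ≥0) : Fin n → ℝ≥0 :=
  fun i => Finset.univ.sup fun j => γ i j (x j)

def walkVal (γ : Fin n → Fin n → ℝ≥0 → ℝ≥0) (x : Fin n → ℝ≥0) : List (Fin n) → ℝ≥0
  | [] => 0
  | [i] => x i
  | i :: j :: l => γ i j (walkVal γ x (j :: l))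

variable {γ : Fin n → Fin n → ℝ≥0 → ℝ≥0}

theorem walkVal_append (x : Fin n → ℝ≥0) (u : List (Fin n)) (a : Fin n) (t : List (Fin n)) :
    walkVal γ x (u ++ a :: t) = walkVal γ (fun _ => walkVal γ x (a :: t)) (u ++ [a]) := by
  induction u with
  | nil => rfl
  | cons b u ih =>
    cases u with
    | nil => rfl
    | cons c u => exact congrArg (γ b c) ih

theorem walkVal_mono (hmono : ∀ i j, Monotone (γ i j)) :
    ∀ (w : List (Fin n)), Monotone fun x => walkVal γ x w
  | [] => fun _ _ _ => le_rfl
  | [i] => fun _ _ h => h i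
  | i :: j :: l => fun _ _ h => hmono i j (walkVal_mono hmono (j :: l) h)

theorem walkVal_zero (hzero : ∀ i j, γ i j 0 = 0) : ∀ w : List (Fin n), walkVal γ 0 w = 0
  | [] => rfl
  | [_] => rfl
  | i :: j :: l => by rw [walkVal, walkVal_zero hzero (j :: l), hzero]

theorem cycleGain_eq_walkVal {c : List (Fin n)} (hc : c ≠ []) (s : ℝ≥0) :
    cycleGain γ c s = walkVal γ (fun _ => s) (c ++ c.take 1) := by
  obtain ⟨i, l, rfl⟩ := List.exists_cons_of_ne_nil hc
  rw [cycleGain, List.rotate_cons_succ, List.rotate_zero]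
  suffices ∀ j, (((j :: l).zip (l ++ [i])).map fun p => γ p.1 p.2).foldr (· ∘ ·) id s =
      walkVal γ (fun _ => s) (j :: l ++ [i]) from this i
  clear hc
  induction l with
  | nil => intro j; rfl
  | cons a l ih => intro j; exact congrArg (γ j a) (ih a)

theorem cycleGain_zero (hzero : ∀ i j, γ i j 0 = 0) : ∀ c : List (Fin n), cycleGain γ c 0 = 0
  | [] => rfl
  | i :: l => by rw [cycleGain_eq_walkVal (List.cons_ne_nil i l)]; exact walkVal_zero hzero _

theorem cycleGain_le_self_of_lt (hzero : ∀ i j, γ i j 0 = 0) {c : List (Fin n)}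
    (h : ∀ s, 0 < s → cycleGain γ c s < s) (s : ℝ≥0) : cycleGain γ c s ≤ s := by
  rcases eq_zero_or_pos s with rfl | hs
  · exact (cycleGain_zero hzero c).le
  · exact (h s hs).le

theorem walkVal_erase_cycle_le (hmono : ∀ i j, Monotone (γ i j)) {a : Fin n} {v : List (Fin n)}
    (hcyc : ∀ s, cycleGain γ (a :: v) s ≤ s) (x : Fin n → ℝ≥0) (u t : List (Fin n)) :
    walkVal γ x (u ++ a :: v ++ a :: t) ≤ walkVal γ x (u ++ a :: t) := by
  rw [List.append_assoc, List.cons_append, walkVal_append x u a (v ++ a :: t),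
    walkVal_append x u a t]
  refine walkVal_mono hmono _ fun _ => ?_
  calc walkVal γ x (a :: (v ++ a :: t))
      = walkVal γ (fun _ => walkVal γ x (a :: t)) (a :: v ++ [a]) := walkVal_append x (a :: v) a t
    _ = cycleGain γ (a :: v) (walkVal γ x (a :: t)) :=
        (cycleGain_eq_walkVal (List.cons_ne_nil a v) _).symm
    _ ≤ walkVal γ x (a :: t) := hcyc _

theorem CyclicSmallGain.cycleGain_lt (hsg : CyclicSmallGain γ) (hmono : ∀ i j, Monotone (γ i j))
    (hzero : ∀ i j, γ i j 0 = 0) {c : List (Fin n)} (hc : c ≠ []) {s : ℝ≥0} (hs : 0 < s) :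
    cycleGain γ c s < s := by
  induction hN : c.length using Nat.strong_induction_on generalizing c s with
  | _ N ih =>
    by_cases hnd : c.Nodup
    · exact hsg c hnd hc s hs
    obtain ⟨a, u, v, t, rfl⟩ := List.exists_eq_append_cons_append_cons_of_not_nodup hnd
    have hcyc := cycleGain_le_self_of_lt hzero fun r hr =>
      ih _ (by simp [← hN]; omega) (List.cons_ne_nil a v) hr rfl
    have htake : (u ++ a :: v ++ a :: t).take 1 = (u ++ a :: t).take 1 := by cases u <;> rfl
    have hc' : u ++ a :: t ≠ [] := by simp
    calc cycleGain γ (u ++ a :: v ++ a :: t) s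
        = walkVal γ (fun _ => s) (u ++ a :: v ++ a :: (t ++ (u ++ a :: t).take 1)) := by
          rw [cycleGain_eq_walkVal hc, htake]; simp
      _ ≤ walkVal γ (fun _ => s) (u ++ a :: (t ++ (u ++ a :: t).take 1)) :=
          walkVal_erase_cycle_le hmono hcyc _ u _
      _ = cycleGain γ (u ++ a :: t) s := by rw [cycleGain_eq_walkVal hc']; simp
      _ < s := ih _ (by simp [← hN]) hc' hs rfl

theorem CyclicSmallGain.cycleGain_le (hsg : CyclicSmallGain γ) (hmono : ∀ i j, Monotone (γ i j))
    (hzero : ∀ i j, γ i j 0 = 0) {c : List (Fin n)} (hc : c ≠ []) (s : ℝ≥0) :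
    cycleGain γ c s ≤ s :=
  cycleGain_le_self_of_lt hzero (fun _ => hsg.cycleGain_lt hmono hzero hc) s

theorem CyclicSmallGain.exists_nodup_walkVal_le (hsg : CyclicSmallGain γ)
    (hmono : ∀ i j, Monotone (γ i j)) (hzero : ∀ i j, γ i j 0 = 0) (x : Fin n → ℝ≥0)
    (i : Fin n) (l : List (Fin n)) :
    ∃ l', (i :: l').Nodup ∧ walkVal γ x (i :: l) ≤ walkVal γ x (i :: l') := by
  induction hN : l.length using Nat.strong_induction_on generalizing l with
  | _ N ih =>
    by_cases hnd : (i :: l).Nodup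
    · exact ⟨l, hnd, le_rfl⟩
    obtain ⟨a, u, v, t, h⟩ := List.exists_eq_append_cons_append_cons_of_not_nodup hnd
    obtain ⟨l', hl', hlen⟩ : ∃ l', u ++ a :: t = i :: l' ∧ l'.length < N := by
      cases u with
      | nil =>
        obtain ⟨rfl, rfl⟩ := List.cons.inj h
        exact ⟨t, rfl, by simp [← hN]; omega⟩
      | cons b u =>
        obtain ⟨rfl, rfl⟩ := List.cons.inj h
        exact ⟨u ++ a :: t, rfl, by simp [← hN]⟩
    obtain ⟨l'', hnd', hle⟩ := ih _ hlen l' rfl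
    refine ⟨l'', hnd', ?_⟩
    calc walkVal γ x (i :: l) = walkVal γ x (u ++ a :: v ++ a :: t) := by rw [h]
      _ ≤ walkVal γ x (u ++ a :: t) :=
          walkVal_erase_cycle_le hmono (hsg.cycleGain_le hmono hzero (List.cons_ne_nil a v)) x u t
      _ ≤ walkVal γ x (i :: l'') := hl' ▸ hle

theorem exists_walkVal_eq_iterate_gainMap (x : Fin n → ℝ≥0) (k : ℕ) (i : Fin n) :
    ∃ l : List (Fin n), l.length = k ∧ (gainMap γ)^[k] x i = walkVal γ x (i :: l) := by
  induction k generalizing i with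
  | zero => exact ⟨[], rfl, rfl⟩
  | succ k ih =>
    obtain ⟨j, -, hj⟩ := Finset.exists_mem_eq_sup Finset.univ ⟨i, Finset.mem_univ i⟩
      fun j => γ i j ((gainMap γ)^[k] x j)
    obtain ⟨l, rfl, hl⟩ := ih j
    refine ⟨j :: l, rfl, ?_⟩
    rw [Function.iterate_succ_apply', gainMap, hj, hl, walkVal]

theorem walkVal_le_iterate_gainMap (hmono : ∀ i j, Monotone (γ i j)) (x : Fin n → ℝ≥0) :
    ∀ (i : Fin n) (l : List (Fin n)), walkVal γ x (i :: l) ≤ (gainMap γ)^[l.length] x i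
  | _, [] => le_rfl
  | i, j :: l => by
    rw [List.length_cons, Function.iterate_succ_apply', walkVal]
    exact (hmono i j (walkVal_le_iterate_gainMap hmono x j l)).trans
      (Finset.le_sup (f := fun j => γ i j ((gainMap γ)^[l.length] x j)) (Finset.mem_univ j))

theorem CyclicSmallGain.iterate_gainMap_le_sup (hsg : CyclicSmallGain γ)
    (hmono : ∀ i j, Monotone (γ i j)) (hzero : ∀ i j, γ i j 0 = 0) (x : Fin n → ℝ≥0) (k : ℕ) :
    (gainMap γ)^[k] x ≤ (Finset.range n).sup fun m => (gainMap γ)^[m] x := by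
  intro i
  obtain ⟨l, rfl, hl⟩ := exists_walkVal_eq_iterate_gainMap x k i
  obtain ⟨l', hnd, hle⟩ := hsg.exists_nodup_walkVal_le hmono hzero x i l
  have hlen : l'.length < n := by simpa using hnd.length_le_card
  calc (gainMap γ)^[l.length] x i = walkVal γ x (i :: l) := hl
    _ ≤ walkVal γ x (i :: l') := hle
    _ ≤ (gainMap γ)^[l'.length] x i := walkVal_le_iterate_gainMap hmono x i l'
    _ ≤ ((Finset.range n).sup fun m => (gainMap γ)^[m] x) i := by
        rw [Finset.sup_apply]
        exact Finset.le_sup (f := fun m => (gainMap γ)^[m] x i) (Finset.mem_range.2 hlen)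

theorem gainMap_monotone (hmono : ∀ i j, Monotone (γ i j)) : Monotone (gainMap γ) :=
  fun _ _ h i => Finset.sup_mono_fun fun j _ => hmono i j (h j)

theorem continuous_gainMap (hcont : ∀ i j, Continuous (γ i j)) : Continuous (gainMap γ) :=
  continuous_pi fun i =>
    Continuous.finset_sup_apply fun j _ => (hcont i j).comp (continuous_apply j)

theorem gainMap_finset_sup (hmono : ∀ i j, Monotone (γ i j)) (hzero : ∀ i j, γ i j 0 = 0)
    {ι : Type*} (s : Finset ι) (v : ι → Fin n → ℝ≥0) :
    gainMap γ (s.sup v) = s.sup fun k => gainMap γ (v k) := by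
  funext i
  simp only [gainMap, Finset.sup_apply]
  rw [Finset.sup_comm]
  refine Finset.sup_congr rfl fun j _ => ?_
  exact Finset.apply_sup_eq_sup_comp (γ i j) (hmono i j).map_sup (hzero i j)

theorem CyclicSmallGain.gainMap_sup_iterate_le (hsg : CyclicSmallGain γ)
    (hmono : ∀ i j, Monotone (γ i j)) (hzero : ∀ i j, γ i j 0 = 0) (x : Fin n → ℝ≥0) :
    gainMap γ ((Finset.range n).sup fun m => (gainMap γ)^[m] x) ≤
      (Finset.range n).sup fun m => (gainMap γ)^[m] x := by
  rw [gainMap_finset_sup hmono hzero]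
  refine Finset.sup_le fun m _ => ?_
  rw [← Function.iterate_succ_apply' (gainMap γ)]
  exact hsg.iterate_gainMap_le_sup hmono hzero x (m + 1)

theorem le_walkVal_iterate (hmono : ∀ i j, Monotone (γ i j)) {L : Fin n → ℝ≥0}
    {f : Fin n → Fin n} (hf : ∀ i, L i ≤ γ i (f i) (L (f i))) (p : ℕ) (y : Fin n) :
    L y ≤ walkVal γ (fun _ => L (f^[p] y)) (List.iterate f y (p + 1)) := by
  induction p generalizing y with
  | zero => exact le_rfl
  | succ p ih =>
    rw [List.iterate, List.iterate, walkVal, ← List.iterate, Function.iterate_succ_apply]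
    exact (hf y).trans (hmono _ _ (ih (f y)))

theorem Function.exists_isPeriodicPt_iterate {α : Type*} [Finite α] (f : α → α) (x : α) :
    ∃ a p, 0 < p ∧ Function.IsPeriodicPt f p (f^[a] x) := by
  obtain ⟨a, b, hab, heq⟩ := Finite.exists_ne_map_eq_of_infinite fun m => f^[m] x
  wlog hlt : a < b generalizing a b
  · exact this b a hab.symm heq.symm (by omega)
  refine ⟨a, b - a, by omega, ?_⟩
  rw [Function.IsPeriodicPt, Function.IsFixedPt, ← Function.iterate_add_apply,
    Nat.sub_add_cancel hlt.le]
  exact heq.symm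

theorem CyclicSmallGain.eq_zero_of_isPeriodicPt (hsg : CyclicSmallGain γ)
    (hmono : ∀ i j, Monotone (γ i j)) (hzero : ∀ i j, γ i j 0 = 0) {L : Fin n → ℝ≥0}
    {f : Fin n → Fin n} (hf : ∀ i, L i ≤ γ i (f i) (L (f i))) {p : ℕ} (hp : 0 < p) {y : Fin n}
    (hy : Function.IsPeriodicPt f p y) : L y = 0 := by
  by_contra hne
  have hc : List.iterate f y p ≠ [] := by simp; omega
  have hcycle : List.iterate f y (p + 1) = List.iterate f y p ++ (List.iterate f y p).take 1 := by
    rw [List.iterate_add, List.take_iterate, hy.eq, min_eq_left hp]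
  have := le_walkVal_iterate hmono hf p y
  rw [hy.eq, hcycle, ← cycleGain_eq_walkVal hc] at this
  exact (this.trans_lt (hsg.cycleGain_lt hmono hzero hc (pos_iff_ne_zero.2 hne))).false

theorem CyclicSmallGain.eq_zero_of_le_gainMap (hsg : CyclicSmallGain γ)
    (hmono : ∀ i j, Monotone (γ i j)) (hzero : ∀ i j, γ i j 0 = 0) {L : Fin n → ℝ≥0}
    (hL : L ≤ gainMap γ L) : L = 0 := by
  have hsucc (i : Fin n) : ∃ j, L i ≤ γ i j (L j) := by
    obtain ⟨j, -, hj⟩ := Finset.exists_mem_eq_sup Finset.univ ⟨i, Finset.mem_univ i⟩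
      fun j => γ i j (L j)
    exact ⟨j, hj ▸ hL i⟩
  choose f hf using hsucc
  funext i
  obtain ⟨a, p, hp, hper⟩ := Function.exists_isPeriodicPt_iterate f i
  have h := le_walkVal_iterate hmono hf a i
  rw [hsg.eq_zero_of_isPeriodicPt hmono hzero hf hp hper] at h
  exact le_antisymm (h.trans (walkVal_zero hzero _).le) zero_le

theorem iterates_le_Q_and_tendsto_zero_general {n : ℕ}
    (γ : Fin n → Fin n → ℝ≥0 → ℝ≥0)
    (hmono : ∀ i j, Monotone (γ i j)) (hcont : ∀ i j, Continuous (γ i j))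
    (hzero : ∀ i j, γ i j 0 = 0)
    (Γ : (Fin n → ℝ≥0) → (Fin n → ℝ≥0))
    (hΓ : ∀ x i, Γ x i = Finset.univ.sup fun j : Fin n => γ i j (x j))
    (hsg : CyclicSmallGain γ)
    (Q : (Fin n → ℝ≥0) → (Fin n → ℝ≥0))
    (hQ : ∀ z, Q z = (Finset.range n).sup fun k => Γ^[k] z)
    (x : Fin n → ℝ≥0) :
    (∀ k : ℕ, 1 ≤ k → Γ^[k] x ≤ Q x) ∧
      Filter.Tendsto (fun k : ℕ => Γ^[k] x) Filter.atTop (nhds 0) := by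
  obtain rfl : Γ = gainMap γ := funext fun x => funext (hΓ x)
  have hle (k : ℕ) : (gainMap γ)^[k] x ≤ Q x := hQ x ▸ hsg.iterate_gainMap_le_sup hmono hzero x k
  refine ⟨fun k _ => hle k, ?_⟩
  have hQx : gainMap γ (Q x) ≤ Q x := hQ x ▸ hsg.gainMap_sup_iterate_le hmono hzero x
  have hanti := (gainMap_monotone hmono).antitone_iterate_of_map_le hQx
  have hlim := tendsto_atTop_ciInf hanti (OrderBot.bddBelow _)
  have hfix := isFixedPt_of_tendsto_iterate hlim (continuous_gainMap hcont).continuousAt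
  rw [hsg.eq_zero_of_le_gainMap hmono hzero hfix.ge] at hlim
  refine (tendsto_const_nhds.Icc hlim).of_smallSets (Eventually.of_forall fun k => ?_)
  exact ⟨zero_le, (gainMap_monotone hmono).iterate k (hle 0)⟩

theorem iterates_le_Q_and_tendsto_zero {n : ℕ} (hn : 0 < n)
    (γ : Fin n → Fin n → ℝ≥0 → ℝ≥0)
    (hmono : ∀ i j, Monotone (γ i j)) (hcont : ∀ i j, Continuous (γ i j))
    (hzero : ∀ i j, γ i j 0 = 0)
    (Γ : (Fin n → ℝ≥0) → (Fin n → ℝ≥0))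
    (hΓ : ∀ x i, Γ x i = Finset.univ.sup fun j : Fin n => γ i j (x j))
    (hsg : CyclicSmallGain γ)
    (Q : (Fin n → ℝ≥0) → (Fin n → ℝ≥0))
    (hQ : ∀ z, Q z = (Finset.range n).sup fun k => Γ^[k] z)
    (x : Fin n → ℝ≥0) :
    (∀ k : ℕ, 1 ≤ k → Γ^[k] x ≤ Q x) ∧
      Filter.Tendsto (fun k : ℕ => Γ^[k] x) Filter.atTop (nhds 0) :=
  iterates_le_Q_and_tendsto_zero_general γ hmono hcont hzero Γ hΓ hsg Q hQ x
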